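/- Fix n ≥ 2, a measurement interval [t_s, t_e], and exponents α, β, γ ∈ (0, ∞). Let x_1 and x_2 be events whose occurrences are n distinct, equally spaced timestamps contained in [t_s, t_e]: x_j has occurrences a_j + i·L_j/(n-1) for i = 0, 1, ..., n-1, where L_j > 0 is the width of x_j's interval of occurrences. If L_1 < L_2, then P(x_1;[t_s,t_e]) < P(x_2;[t_s,t_e]). -/

import Mathlib

/-!
An event is a finite, nondecreasing list `l` of occurrence timestamps (reals, repetitions
allowed). `tF l` / `tL l` are the first / last occurrences, `l.dedup` lists the distinct
occurrences, `gapSeq l i` is the `i`-th gap between consecutive distinct occurrences,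
`Wterm` is the width term, `Fterm` the frequency term, `gapEntropy` the (normalized-gap)
Shannon entropy, `Sterm` the spread term, and `Pers` the persistence measure
`W^α · F^β · S^γ`.
-/

noncomputable section

/-- First occurrence `t_f` of an event (a sorted list of timestamps). -/
def tF (l : List ℝ) : ℝ := l.headI

/-- Last occurrence `t_l` of an event. -/
def tL (l : List ℝ) : ℝ := l.getLastD 0

/-- The `i`-th gap `g i = u (i+1) - u i` between consecutive distinct occurrences. -/
def gapSeq (l : List ℝ) (i : ℕ) : ℝ := l.dedup.getD (i + 1) 0 - l.dedup.getD i 0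

/-- Width term `W(x;[t_s,t_e]) = (t_l - t_f + 1)/(t_e - t_s + 1)` (0 if no occurrences). -/
def Wterm (l : List ℝ) (ts te : ℝ) : ℝ :=
  if l.length = 0 then 0 else (tL l - tF l + 1) / (te - ts + 1)

/-- Frequency term `F(x;[t_s,t_e]) = log₁₀ (n + 1)`. -/
def Fterm (l : List ℝ) : ℝ := Real.logb 10 (l.length + 1)

/-- Gap entropy `H(Γ_x) = -∑ (g i/(t_l - t_f)) · log₂ (g i/(t_l - t_f))`. -/
def gapEntropy (l : List ℝ) : ℝ :=
  -∑ i ∈ Finset.range (l.dedup.length - 1),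
    (gapSeq l i / (tL l - tF l)) * Real.logb 2 (gapSeq l i / (tL l - tF l))

/-- Spread term `S(x;[t_s,t_e]) = H(Γ_x)/log₂(m-1) + 1` if there are `m - 1 > 1` gaps,
and `1` if `m - 1 ∈ {0, 1}`. -/
def Sterm (l : List ℝ) : ℝ :=
  if 1 < l.dedup.length - 1 then
    gapEntropy l / Real.logb 2 (l.dedup.length - 1) + 1
  else 1

/-- Persistence measure `P(x;[t_s,t_e]) = W^α · F^β · S^γ` (real exponents). -/
def Pers (l : List ℝ) (ts te α β γ : ℝ) : ℝ :=
  Wterm l ts te ^ α * Fterm l ^ β * Sterm l ^ γ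

end

/-- The event with `n` equally spaced occurrences `a + i · (L / (n - 1))`, `i = 0, …, n-1`,
covering an interval of occurrences of width `L`. -/
noncomputable def uniformEvent (a L : ℝ) (n : ℕ) : List ℝ :=
  (List.range n).map (fun i => a + (i : ℝ) * (L / ((n : ℝ) - 1)))

/-!
For an event with `n ≥ 2` equally spaced occurrences, only the width term depends on the
width `L`: `F = log₁₀ (n + 1)`, and since the `n` occurrences are distinct and the normalized
gaps are all `1/(n-1)`, the gap entropy is maximal, `log₂ (n - 1)`, so `S` is `2` (or `1`
when `n = 2`). The width term `(L + 1)/(t_e - t_s + 1)` is strictly increasing in `L`, its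
denominator being positive because `x₁` fits in `[t_s, t_e]`.
-/

theorem tF_mem {l : List ℝ} (hl : l ≠ []) : tF l ∈ l := by
  cases l with
  | nil => exact absurd rfl hl
  | cons x t => exact List.mem_cons_self

theorem tL_mem {l : List ℝ} (hl : l ≠ []) : tL l ∈ l := by
  cases l with
  | nil => exact absurd rfl hl
  | cons x t =>
    rw [tL, List.getLastD_cons]
    exact List.getLastD_mem_cons

theorem tL_sub_tF_le {l : List ℝ} {ts te : ℝ} (hl : l ≠ [])
    (h : ∀ t ∈ l, ts ≤ t ∧ t ≤ te) : tL l - tF l ≤ te - ts := by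
  linarith [(h _ (tF_mem hl)).1, (h _ (tL_mem hl)).2]

theorem Fterm_pos {l : List ℝ} (hl : l ≠ []) : 0 < Fterm l := by
  have : 1 ≤ l.length := List.length_pos_iff.mpr hl
  exact Real.logb_pos (by norm_num) (by norm_cast; omega)

theorem gapEntropy_of_gaps_eq {l : List ℝ}
    (h : ∀ i < l.dedup.length - 1,
      gapSeq l i / (tL l - tF l) = ((l.dedup.length - 1 : ℕ) : ℝ)⁻¹) :
    gapEntropy l = Real.logb 2 ((l.dedup.length - 1 : ℕ) : ℝ) := by
  set k := l.dedup.length - 1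
  rw [gapEntropy, Finset.sum_congr rfl fun i hi => by rw [h i (Finset.mem_range.mp hi)],
    Finset.sum_const, Finset.card_range, nsmul_eq_mul, Real.logb_inv, ← mul_assoc]
  rcases eq_or_ne (k : ℝ) 0 with hk | hk
  · simp [hk]
  · rw [mul_inv_cancel₀ hk]
    ring

theorem Sterm_of_gaps_eq {l : List ℝ}
    (h : ∀ i < l.dedup.length - 1,
      gapSeq l i / (tL l - tF l) = ((l.dedup.length - 1 : ℕ) : ℝ)⁻¹) :
    Sterm l = if 1 < l.dedup.length - 1 then 2 else 1 := by
  rw [Sterm]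
  split_ifs with hk
  · have hcast : ((l.dedup.length - 1 : ℕ) : ℝ) = (l.dedup.length : ℝ) - 1 := by
      rw [Nat.cast_sub (by omega), Nat.cast_one]
    have hlog : Real.logb 2 ((l.dedup.length : ℝ) - 1) ≠ 0 :=
      (Real.logb_pos (by norm_num) (by rw [← hcast]; exact_mod_cast hk)).ne'
    rw [gapEntropy_of_gaps_eq h, hcast, div_self hlog]
    norm_num
  · rfl

theorem Pers_lt_Pers_of_Wterm_lt {l₁ l₂ : List ℝ} {ts te α β γ : ℝ} (hα : 0 < α)
    (hW₁ : 0 ≤ Wterm l₁ ts te) (hW : Wterm l₁ ts te < Wterm l₂ ts te)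
    (hF : Fterm l₁ = Fterm l₂) (hF₁ : 0 < Fterm l₁)
    (hS : Sterm l₁ = Sterm l₂) (hS₁ : 0 < Sterm l₁) :
    Pers l₁ ts te α β γ < Pers l₂ ts te α β γ := by
  rw [Pers, Pers, ← hF, ← hS]
  gcongr

section UniformEvent

variable (a L : ℝ) {n : ℕ}

/-- The coercion `List ℕ → List ℝ` of `List.range n` in `uniformEvent` elaborates to a
monadic bind. -/
theorem uniformEvent_eq_map_range :
    uniformEvent a L n = (List.range n).map fun i : ℕ => a + i * (L / ((n : ℝ) - 1)) := by
  simp only [uniformEvent, bind_pure_comp, List.map_eq_map, List.map_map]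
  rfl

theorem length_uniformEvent : (uniformEvent a L n).length = n := by
  simp [uniformEvent_eq_map_range]

theorem uniformEvent_ne_nil (hn : 0 < n) : uniformEvent a L n ≠ [] :=
  List.ne_nil_of_length_pos ((length_uniformEvent a L).symm ▸ hn)

theorem getD_uniformEvent {i : ℕ} (hi : i < n) :
    (uniformEvent a L n).getD i 0 = a + i * (L / ((n : ℝ) - 1)) := by
  simp [uniformEvent_eq_map_range, List.getD_eq_getElem?_getD, hi]

theorem tF_uniformEvent (hn : 0 < n) : tF (uniformEvent a L n) = a := by
  obtain ⟨k, rfl⟩ := Nat.exists_eq_add_one_of_ne_zero hn.ne'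
  simp [tF, uniformEvent_eq_map_range, List.range_succ_eq_map]

theorem tL_uniformEvent (hn : 2 ≤ n) : tL (uniformEvent a L n) = a + L := by
  have hn' : (n : ℝ) - 1 ≠ 0 := by
    have : (2 : ℝ) ≤ n := by exact_mod_cast hn
    linarith
  simp only [tL, uniformEvent_eq_map_range, List.getLastD_eq_getLast?, List.getLast?_map,
    List.getLast?_range, if_neg (by omega : n ≠ 0), Option.map_some, Option.getD_some]
  rw [Nat.cast_sub (by omega), Nat.cast_one]
  field_simp

variable {a L}

theorem nodup_uniformEvent (hL : L ≠ 0) (hn : 2 ≤ n) : (uniformEvent a L n).Nodup := by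
  have hn' : (1 : ℝ) < n := by exact_mod_cast hn
  rw [uniformEvent_eq_map_range]
  refine List.nodup_range.map fun i j hij => ?_
  have hd : L / ((n : ℝ) - 1) ≠ 0 := div_ne_zero hL (by linarith)
  exact_mod_cast mul_right_cancel₀ hd (add_left_cancel hij)

theorem gapSeq_uniformEvent (hL : L ≠ 0) (hn : 2 ≤ n) {i : ℕ} (hi : i < n - 1) :
    gapSeq (uniformEvent a L n) i = L / ((n : ℝ) - 1) := by
  rw [gapSeq, (nodup_uniformEvent hL hn).dedup, getD_uniformEvent a L (by omega : i + 1 < n),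
    getD_uniformEvent a L (by omega : i < n)]
  push_cast
  ring

theorem Sterm_uniformEvent (hL : L ≠ 0) (hn : 2 ≤ n) :
    Sterm (uniformEvent a L n) = if 2 < n then 2 else 1 := by
  have hlen : (uniformEvent a L n).dedup.length = n := by
    rw [(nodup_uniformEvent hL hn).dedup, length_uniformEvent]
  rw [Sterm_of_gaps_eq, hlen]
  · exact if_congr (by omega) rfl rfl
  intro i hi
  rw [hlen] at hi
  rw [hlen, gapSeq_uniformEvent hL hn hi, tL_uniformEvent a L hn, tF_uniformEvent a L (by omega),
    Nat.cast_sub (by omega), Nat.cast_one, add_sub_cancel_left, div_div_cancel_left' hL]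

theorem Wterm_uniformEvent (hn : 2 ≤ n) (ts te : ℝ) :
    Wterm (uniformEvent a L n) ts te = (L + 1) / (te - ts + 1) := by
  rw [Wterm, if_neg (by rw [length_uniformEvent]; omega), tL_uniformEvent a L hn,
    tF_uniformEvent a L (by omega)]
  ring_nf

end UniformEvent

theorem persistence_P1_wider_interval_general (ts te a₁ a₂ L₁ L₂ : ℝ) (n : ℕ) (hn : 2 ≤ n)
    (hL₁ : 0 < L₁) (hL₂ : 0 < L₂) (hL : L₁ < L₂)
    (hmem₁ : ∀ t ∈ uniformEvent a₁ L₁ n, ts ≤ t ∧ t ≤ te)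
    (α β γ : ℝ) (hα : 0 < α) :
    Pers (uniformEvent a₁ L₁ n) ts te α β γ < Pers (uniformEvent a₂ L₂ n) ts te α β γ := by
  have hne : uniformEvent a₁ L₁ n ≠ [] := uniformEvent_ne_nil a₁ L₁ (by omega)
  have hspan : L₁ ≤ te - ts := by
    simpa [tL_uniformEvent a₁ L₁ hn, tF_uniformEvent a₁ L₁ (by omega : 0 < n)]
      using tL_sub_tF_le hne hmem₁
  have hden : 0 < te - ts + 1 := by linarith
  apply Pers_lt_Pers_of_Wterm_lt hα
  · rw [Wterm_uniformEvent hn]; positivity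
  · rw [Wterm_uniformEvent hn, Wterm_uniformEvent hn]; gcongr
  · simp only [Fterm, length_uniformEvent]
  · exact Fterm_pos hne
  · rw [Sterm_uniformEvent hL₁.ne' hn, Sterm_uniformEvent hL₂.ne' hn]
  · rw [Sterm_uniformEvent hL₁.ne' hn]; split_ifs <;> norm_num

/-- Property P1: among two events with `n ≥ 2` distinct, uniformly spaced occurrences in
`[t_s, t_e]`, persistence is strictly larger for the one whose occurrences are spread over
a wider interval (`L₁ < L₂`). -/
theorem persistence_P1_wider_interval (ts te a₁ a₂ L₁ L₂ : ℝ) (n : ℕ) (hn : 2 ≤ n)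
    (hL₁ : 0 < L₁) (hL₂ : 0 < L₂) (hL : L₁ < L₂)
    (hmem₁ : ∀ t ∈ uniformEvent a₁ L₁ n, ts ≤ t ∧ t ≤ te)
    (hmem₂ : ∀ t ∈ uniformEvent a₂ L₂ n, ts ≤ t ∧ t ≤ te)
    (α β γ : ℝ) (hα : 0 < α) (hβ : 0 < β) (hγ : 0 < γ) :
    Pers (uniformEvent a₁ L₁ n) ts te α β γ < Pers (uniformEvent a₂ L₂ n) ts te α β γ :=
  persistence_P1_wider_interval_general ts te a₁ a₂ L₁ L₂ n hn hL₁ hL₂ hL hmem₁ α β γ hα
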